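/- arXiv:2006.11699 — 3 statements merged into one kernel-verified Lean document; each statement's English description precedes it below -/
import Mathlib

section
/- Let k be an infinite field and x a closed point of (P^1_k)^n. Then the orbit of x under the action of (PGL_2(k))^n (acting componentwise by k-automorphisms of P^1) is Zariski dense in (P^1_k)^n. -/
open scoped LinearAlgebra.Projectivization
open Projectivization
open MvPolynomial

/-- The action of an element of `GL₂(k)` on `ℙ¹(K)` for a field extension `K/k`, viewed as the
projectivization of `K²`: base change the matrix to `K` and apply the induced linear
automorphism. (This is the action of `PGL₂(k)` by `k`-automorphisms of `ℙ¹`, described on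
points over `K`; the orbits of `GL₂(k)` and `PGL₂(k)` coincide.) -/
noncomputable def glAct {k K : Type} [Field k] [Field K] [Algebra k K]
    (M : GL (Fin 2) k) (p : ℙ K (Fin 2 → K)) : ℙ K (Fin 2 → K) :=
  Projectivization.map
    (Matrix.mulVecLin ((Units.map (RingHom.mapMatrix (algebraMap k K)).toMonoidHom M :
        GL (Fin 2) K) : Matrix (Fin 2) (Fin 2) K))
    (by
      set N := (Units.map (RingHom.mapMatrix (algebraMap k K)).toMonoidHom M : GL (Fin 2) K)
      have : (N⁻¹ : GL (Fin 2) K).1.mulVecLin ∘ (N : Matrix (Fin 2) (Fin 2) K).mulVecLin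
          = id := by
        ext v i
        simp only [Function.comp_apply, Matrix.mulVecLin_apply, Matrix.mulVec_mulVec, id_eq]
        rw [show ((N⁻¹ : GL (Fin 2) K) : Matrix (Fin 2) (Fin 2) K) * N = 1 from N.inv_mul]
        simp
      exact Function.LeftInverse.injective (g := (N⁻¹ : GL (Fin 2) K).1.mulVecLin)
        (fun v => congrFun this v))
    p

/-- `P` (a polynomial in the `n` pairs of homogeneous coordinates on `(ℙ¹)ⁿ`) vanishes on the
affine cone over the point `x` of `(ℙ¹_K)ⁿ`, i.e. on every tuple of homogeneous coordinate
lifts of the components of `x`.  A subset of `(ℙ¹)ⁿ` is Zariski dense iff every polynomial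
vanishing on the cone over it vanishes on the cone over all of `(ℙ¹)ⁿ`. -/
def VanishesOnCone {K : Type} [Field K] {n : ℕ}
    (P : MvPolynomial (Fin n × Fin 2) K) (x : Fin n → ℙ K (Fin 2 → K)) : Prop :=
  ∀ (v : Fin n → Fin 2 → K) (hv : ∀ i, v i ≠ 0),
    (∀ i, Projectivization.mk K (v i) (hv i) = x i) →
      MvPolynomial.eval (fun q : Fin n × Fin 2 => v q.1 q.2) P = 0


section Aux

variable {k K : Type} [Field k] [Infinite k] [Field K] [Algebra k K]

theorem aux_eval_aeval {σ τ : Type} (f : σ → MvPolynomial τ K) (φ : MvPolynomial σ K)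
    (w : τ → K) : eval w (aeval f φ) = eval (fun i => eval w (f i)) φ := by
  simp only [aeval_eq_bind₁]
  exact eval₂Hom_bind₁ (RingHom.id K) w f φ

theorem aux_k_points {σ : Type} (Q : MvPolynomial σ K)
    (h : ∀ v : σ → k, eval (fun i => algebraMap k K (v i)) Q = 0) : Q = 0 := by
  classical
  ext m
  rw [coeff_zero, ← Module.forall_dual_apply_eq_zero_iff k (Q.coeff m)]
  intro f
  set Qf : MvPolynomial σ k := ∑ m' ∈ Q.support, monomial m' (f (Q.coeff m')) with hQf
  have hcoeff : ∀ m', Qf.coeff m' = f (Q.coeff m') := by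
    intro m'
    rw [hQf, coeff_sum]
    by_cases hm' : m' ∈ Q.support
    · rw [Finset.sum_eq_single m']
      · rw [coeff_monomial, if_pos rfl]
      · intro b _ hb; rw [coeff_monomial, if_neg hb]
      · intro hn; exact absurd hm' hn
    · rw [Finset.sum_eq_zero, MvPolynomial.notMem_support_iff.mp hm', map_zero]
      intro b hb
      rw [coeff_monomial, if_neg]
      rintro rfl; exact hm' hb
  have hev : ∀ v : σ → k, eval v Qf = 0 := by
    intro v
    have key : eval v Qf = f (eval (fun i => algebraMap k K (v i)) Q) := by
      rw [hQf, map_sum (eval v), eval_eq (fun i => algebraMap k K (v i)) Q, map_sum f]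
      refine Finset.sum_congr rfl fun d _ => ?_
      rw [eval_monomial]
      have h1 : Q.coeff d * ∏ i ∈ d.support, algebraMap k K (v i) ^ d i
          = (∏ i ∈ d.support, v i ^ d i) • Q.coeff d := by
        rw [Algebra.smul_def, map_prod]
        simp_rw [map_pow]
        ring
      rw [h1, map_smul, smul_eq_mul, Finsupp.prod]
      ring
    rw [key, h v, map_zero]
  have hQf0 : Qf = 0 := MvPolynomial.funext (fun v => by rw [hev v, map_zero])
  rw [← hcoeff m, hQf0, coeff_zero]

theorem aux_eval_smul {σ : Type} {φ : MvPolynomial σ K} {n : ℕ}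
    (h : φ.IsHomogeneous n) (t : K) (w : σ → K) :
    eval (t • w) φ = t ^ n * eval w φ := by
  rw [eval_eq, eval_eq, Finset.mul_sum]
  refine Finset.sum_congr rfl fun d hd => ?_
  have hdeg : ∑ i ∈ d.support, d i = n := by
    have h2 : Finsupp.degree d = n := by
      rw [Finsupp.degree_eq_weight_one]
      exact h (MvPolynomial.mem_support_iff.mp hd)
    exact h2
  simp only [Pi.smul_apply, smul_eq_mul, mul_pow]
  rw [Finset.prod_mul_distrib, Finset.prod_pow_eq_pow_sum, hdeg]
  ring

theorem aux_density {u : Fin 2 → K} (hu : u ≠ 0) (Q : MvPolynomial (Fin 2) K)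
    (h : ∀ t : K, t ≠ 0 → ∀ M : GL (Fin 2) k,
      eval (t • (((M : Matrix (Fin 2) (Fin 2) k).map (algebraMap k K)).mulVec u)) Q = 0) :
    Q = 0 := by
  classical
  haveI : Infinite K := Infinite.of_injective _ (algebraMap k K).injective
  -- Step 1: each homogeneous component vanishes on the matrix orbit
  have h1 : ∀ (d : ℕ) (M : GL (Fin 2) k),
      eval (((M : Matrix (Fin 2) (Fin 2) k).map (algebraMap k K)).mulVec u)
        (homogeneousComponent d Q) = 0 := by
    intro d M
    set w := ((M : Matrix (Fin 2) (Fin 2) k).map (algebraMap k K)).mulVec u with hw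
    set p : Polynomial K := ∑ e ∈ Finset.range (Q.totalDegree + 1),
      Polynomial.C (eval w (homogeneousComponent e Q)) * Polynomial.X ^ e with hp
    have hev : ∀ t : K, p.eval t = eval (t • w) Q := by
      intro t
      conv_rhs => rw [← MvPolynomial.sum_homogeneousComponent Q]
      rw [map_sum (eval (t • w)), hp, Polynomial.eval_finset_sum]
      refine Finset.sum_congr rfl fun e _ => ?_
      rw [Polynomial.eval_mul, Polynomial.eval_C, Polynomial.eval_pow, Polynomial.eval_X,
        aux_eval_smul (homogeneousComponent_isHomogeneous e Q) t w]
      ring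
    have hp0 : p = 0 := by
      apply Polynomial.eq_zero_of_infinite_isRoot
      apply Set.Infinite.mono (s := {t : K | t ≠ 0})
      · intro t ht
        simp only [Set.mem_setOf_eq, Polynomial.IsRoot]
        rw [hev]
        exact h t ht M
      · have : ({t : K | t ≠ 0} : Set K) = {(0 : K)}ᶜ := by ext t; simp
        rw [this]
        exact (Set.finite_singleton 0).infinite_compl
    by_cases hd : d ≤ Q.totalDegree
    · have hc : p.coeff d = eval w (homogeneousComponent d Q) := by
        rw [hp, Polynomial.finset_sum_coeff, Finset.sum_eq_single d]
        · rw [Polynomial.coeff_C_mul, Polynomial.coeff_X_pow, if_pos rfl, mul_one]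
        · intro e _ hne
          rw [Polynomial.coeff_C_mul, Polynomial.coeff_X_pow, if_neg (Ne.symm hne), mul_zero]
        · intro hn
          exact absurd (Finset.mem_range.mpr (Nat.lt_succ_of_le hd)) hn
      rw [← hc, hp0, Polynomial.coeff_zero]
    · rw [homogeneousComponent_eq_zero d Q (lt_of_not_ge hd), map_zero]
  -- Step 2: each homogeneous component vanishes everywhere
  have h2 : ∀ (d : ℕ) (z : Fin 2 → K), eval z (homogeneousComponent d Q) = 0 := by
    intro d z
    set Qd := homogeneousComponent d Q with hQd
    set R : MvPolynomial (Fin 2 × Fin 2) K :=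
      aeval (fun b : Fin 2 => ∑ j : Fin 2, X (b, j) * C (u j)) Qd with hR
    have hevalR : ∀ m : Fin 2 × Fin 2 → K,
        eval m R = eval (fun b => ∑ j : Fin 2, m (b, j) * u j) Qd := by
      intro m
      rw [hR, aux_eval_aeval]
      have hfun : (fun i : Fin 2 => eval m (∑ j : Fin 2, X (i, j) * C (u j)))
          = fun b => ∑ j : Fin 2, m (b, j) * u j := by
        funext b
        simp
      rw [hfun]
    set Δ : MvPolynomial (Fin 2 × Fin 2) K :=
      X (0, 0) * X (1, 1) - X (0, 1) * X (1, 0) with hΔ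
    have hDR : Δ * R = 0 := by
      apply aux_k_points (k := k)
      intro v
      rw [map_mul]
      by_cases hdet : v (0, 0) * v (1, 1) - v (0, 1) * v (1, 0) = 0
      · have hΔ0 : eval (fun i => algebraMap k K (v i)) Δ = 0 := by
          rw [hΔ]
          simp only [map_sub, map_mul, eval_X]
          rw [← map_mul, ← map_mul, ← map_sub, hdet, map_zero]
        rw [hΔ0, zero_mul]
      · have hdet' : IsUnit (Matrix.of (fun b j => v (b, j)) : Matrix (Fin 2) (Fin 2) k) := by
          rw [Matrix.isUnit_iff_isUnit_det, Matrix.det_fin_two, isUnit_iff_ne_zero]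
          simpa using hdet
        set M : GL (Fin 2) k := hdet'.unit with hMdef
        have hM : (M : Matrix (Fin 2) (Fin 2) k) = Matrix.of fun b j => v (b, j) :=
          hdet'.unit_spec
        have hR0 : eval (fun i => algebraMap k K (v i)) R = 0 := by
          rw [hevalR]
          have := h1 d M
          rw [← hQd] at this
          have harg : (fun b => ∑ j : Fin 2, algebraMap k K (v (b, j)) * u j)
              = ((M : Matrix (Fin 2) (Fin 2) k).map (algebraMap k K)).mulVec u := by
            funext b
            rw [hM]
            simp [Matrix.mulVec, dotProduct]
          rw [harg]
          exact this
        rw [hR0, mul_zero]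
    have hΔne : Δ ≠ 0 := by
      intro h0
      have h1' := congrArg (eval (fun q : Fin 2 × Fin 2 => if q.1 = q.2 then (1 : K) else 0)) h0
      rw [hΔ] at h1'
      simp at h1'
    have hR0 : R = 0 := by
      rcases mul_eq_zero.mp hDR with h' | h'
      · exact absurd h' hΔne
      · exact h'
    obtain ⟨j0, hj0⟩ : ∃ j, u j ≠ 0 := by
      by_contra hc
      push_neg at hc
      exact hu (funext hc)
    have hspec := hevalR (fun q => if q.2 = j0 then z q.1 / u j0 else 0)
    rw [hR0, map_zero] at hspec
    have heq : (fun b => ∑ j : Fin 2, (if j = j0 then z b / u j0 else 0) * u j) = z := by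
      funext b
      rw [Finset.sum_eq_single j0]
      · rw [if_pos rfl, div_mul_cancel₀ _ hj0]
      · intro j _ hj; rw [if_neg hj, zero_mul]
      · intro hn; exact absurd (Finset.mem_univ j0) hn
    rw [heq] at hspec
    exact hspec.symm
  -- conclude
  refine MvPolynomial.funext (q := 0) fun z => ?_
  rw [map_zero, ← MvPolynomial.sum_homogeneousComponent Q, map_sum]
  exact Finset.sum_eq_zero fun d _ => h2 d z

theorem aux_coe_mapUnits (M : GL (Fin 2) k) :
    ((Units.map (RingHom.mapMatrix (algebraMap k K)).toMonoidHom M : GL (Fin 2) K) :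
      Matrix (Fin 2) (Fin 2) K) = (M : Matrix (Fin 2) (Fin 2) k).map (algebraMap k K) := rfl

theorem aux_mulVec_ne_zero (M : GL (Fin 2) k) {w : Fin 2 → K} (hw : w ≠ 0) :
    ((M : Matrix (Fin 2) (Fin 2) k).map (algebraMap k K)).mulVec w ≠ 0 := by
  set NU : GL (Fin 2) K := Units.map (RingHom.mapMatrix (algebraMap k K)).toMonoidHom M with hNU
  intro h0
  apply hw
  have hw2 : w = ((NU⁻¹ : GL (Fin 2) K) : Matrix (Fin 2) (Fin 2) K).mulVec
      (((NU : Matrix (Fin 2) (Fin 2) K)).mulVec w) := by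
    rw [Matrix.mulVec_mulVec,
      show ((NU⁻¹ : GL (Fin 2) K) : Matrix (Fin 2) (Fin 2) K) * NU = 1 from NU.inv_mul,
      Matrix.one_mulVec]
  rw [hw2, aux_coe_mapUnits, h0, Matrix.mulVec_zero]

theorem aux_glAct_mk (M : GL (Fin 2) k) {w : Fin 2 → K} (hw : w ≠ 0) :
    glAct M (Projectivization.mk K w hw)
      = Projectivization.mk K (((M : Matrix (Fin 2) (Fin 2) k).map (algebraMap k K)).mulVec w)
        (aux_mulVec_ne_zero M hw) := by
  unfold glAct
  rw [Projectivization.map_mk]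
  rfl

/-- membership in the cone over the orbit of a single point -/
def InOrbitCone (x : ℙ K (Fin 2 → K)) (w : Fin 2 → K) : Prop :=
  ∃ t : K, t ≠ 0 ∧ ∃ M : GL (Fin 2) k,
    w = t • (((M : Matrix (Fin 2) (Fin 2) k).map (algebraMap k K)).mulVec x.rep)

end Aux

/-- Let `k` be an infinite field and `x` a closed point of `(ℙ¹_k)ⁿ`
(represented by a point of `(ℙ¹(k̄))ⁿ` over an algebraic closure `K = k̄`). Then the orbit of
`x` under `(PGL₂(k))ⁿ`, acting componentwise by `k`-automorphisms of `ℙ¹`, is Zariski dense in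
`(ℙ¹_k)ⁿ`: every polynomial vanishing on (the cone over) the orbit vanishes identically on
(the cone over) `(ℙ¹)ⁿ`. -/
theorem stmt0 (k : Type) [Field k] [Infinite k] (K : Type) [Field K] [Algebra k K]
    [IsAlgClosure k K] (n : ℕ) (x : Fin n → ℙ K (Fin 2 → K))
    (P : MvPolynomial (Fin n × Fin 2) K)
    (hP : ∀ g : Fin n → GL (Fin 2) k, VanishesOnCone P (fun i => glAct (g i) (x i))) :
    ∀ y : Fin n → ℙ K (Fin 2 → K), VanishesOnCone P y := by
  classical
  have claim : ∀ s : Finset (Fin n), ∀ v : Fin n → Fin 2 → K,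
      (∀ i ∉ s, InOrbitCone (k := k) (x i) (v i)) →
      eval (fun q : Fin n × Fin 2 => v q.1 q.2) P = 0 := by
    intro s
    induction s using Finset.induction_on with
    | empty =>
      intro v hv
      choose t ht hM using fun i => hv i (Finset.notMem_empty i)
      choose M hM using hM
      have hvne : ∀ i, v i ≠ 0 := by
        intro i
        rw [hM i]
        exact smul_ne_zero (ht i) (aux_mulVec_ne_zero (M i) (x i).rep_nonzero)
      refine hP M v hvne fun i => ?_
      show Projectivization.mk K (v i) (hvne i) = glAct (M i) (x i)
      conv_rhs => rw [← (x i).mk_rep]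
      rw [aux_glAct_mk, Projectivization.mk_eq_mk_iff]
      exact ⟨Units.mk0 (t i) (ht i), (hM i).symm⟩
    | @insert a s ha ih =>
      intro v hv
      set Q : MvPolynomial (Fin 2) K :=
        aeval (fun q : Fin n × Fin 2 =>
          if q.1 = a then (X q.2 : MvPolynomial (Fin 2) K) else C (v q.1 q.2)) P with hQdef
      have hQeval : ∀ w : Fin 2 → K,
          eval w Q = eval (fun q : Fin n × Fin 2 =>
            if q.1 = a then w q.2 else v q.1 q.2) P := by
        intro w
        rw [hQdef, aux_eval_aeval]
        have hfun : (fun i : Fin n × Fin 2 =>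
            eval w (if i.1 = a then (X i.2 : MvPolynomial (Fin 2) K) else C (v i.1 i.2)))
            = fun q : Fin n × Fin 2 => if q.1 = a then w q.2 else v q.1 q.2 := by
          funext q
          by_cases hq : q.1 = a <;> simp [hq]
        rw [hfun]
      have hQ0 : Q = 0 := by
        refine aux_density (k := k) (x a).rep_nonzero Q fun t ht M => ?_
        rw [hQeval]
        set w := t • (((M : Matrix (Fin 2) (Fin 2) k).map (algebraMap k K)).mulVec (x a).rep)
          with hwdef
        have : (fun q : Fin n × Fin 2 => if q.1 = a then w q.2 else v q.1 q.2)
            = fun q : Fin n × Fin 2 => (fun i => if i = a then w else v i) q.1 q.2 := by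
          funext q
          by_cases hq : q.1 = a <;> simp [hq]
        rw [this]
        refine ih (fun i => if i = a then w else v i) fun i hi => ?_
        by_cases hia : i = a
        · subst hia
          simp only [if_pos rfl]
          exact ⟨t, ht, M, hwdef⟩
        · simp only [if_neg hia]
          exact hv i (by simp [Finset.mem_insert, hia, hi])
      have := hQeval (fun b => v a b)
      rw [hQ0, map_zero] at this
      have harg : (fun q : Fin n × Fin 2 => if q.1 = a then v a q.2 else v q.1 q.2)
          = fun q : Fin n × Fin 2 => v q.1 q.2 := by
        funext q
        by_cases hq : q.1 = a <;> simp [hq]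
      rw [harg] at this
      exact this.symm
  intro y v hv _
  exact claim Finset.univ v (fun i hi => absurd (Finset.mem_univ i) hi)
end

section
/- Let W ⊆ X be a locally closed subvariety of a k-variety X over a global field k, and suppose X satisfies very strong approximation for an obstruction datum (ω, S, k). Then W also satisfies very strong approximation for (ω, S, k). That is: if every adelic point of X surviving the obstruction ω is rational, then the same holds for W. -/
open AlgebraicGeometry CategoryTheory

noncomputable section

variable (k : Type) [Field k]

/-- `Spec R` as a scheme over `Spec k`, for a `k`-algebra `R`; for `R` the ring of adeles
`𝔸_k` (resp. `𝔸_{k,S}`, resp. `k` itself) the set of morphisms `specOver k R ⟶ X` in the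
category of schemes over `k` is the set of adelic points `X(𝔸_k)` (resp. `X(𝔸_{k,S})`,
resp. the set of rational points `X(k)`). -/
def specOver (R : Type) [CommRing R] [Algebra k R] : Over (Spec (CommRingCat.of k)) :=
  Over.mk (Spec.map (CommRingCat.ofHom (algebraMap k R)))

/-- The morphism `specOver k S ⟶ specOver k R` induced by a `k`-algebra map `R →ₐ[k] S`
(e.g. the projection `𝔸_k → 𝔸_{k,S}`, or the inclusion `k → 𝔸_k`). -/
def resOver {R S : Type} [CommRing R] [Algebra k R] [CommRing S] [Algebra k S]
    (φ : R →ₐ[k] S) : specOver k S ⟶ specOver k R :=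
  Over.homMk (Spec.map (CommRingCat.ofHom (φ : R →+* S)))
    (by
      dsimp [specOver]
      rw [← Spec.map_comp]
      congr 1
      exact CommRingCat.hom_ext (RingHom.ext fun x => (φ.commutes x)))

/-- A generalized obstruction (to the local-global principle) over `k`, with adele ring `A`:
a subfunctor `X ↦ X(𝔸_k)^ω ⊆ X(𝔸_k)` of the adelic-points functor on `k`-varieties
containing the rational points `X(k)`. -/
structure GeneralizedObstruction (A : Type) [CommRing A] [Algebra k A] where
  obs : ∀ X : Over (Spec (CommRingCat.of k)), Set (specOver k A ⟶ X)
  functorial : ∀ {X Y : Over (Spec (CommRingCat.of k))} (f : X ⟶ Y)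
    {α : specOver k A ⟶ X}, α ∈ obs X → α ≫ f ∈ obs Y
  contains_rat : ∀ (X : Over (Spec (CommRingCat.of k))) (x : specOver k k ⟶ X),
    resOver k (Algebra.ofId k A) ≫ x ∈ obs X

variable {A AS : Type} [CommRing A] [Algebra k A] [CommRing AS] [Algebra k AS]

/-- The projected obstruction set `X(𝔸_{k,S})^ω`: the image of `X(𝔸_k)^ω` under the
projection `X(𝔸_k) → X(𝔸_{k,S})` induced by `π : 𝔸_k → 𝔸_{k,S}`. -/
def obsSet (ω : GeneralizedObstruction k A) (π : A →ₐ[k] AS)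
    (X : Over (Spec (CommRingCat.of k))) : Set (specOver k AS ⟶ X) :=
  (fun α => resOver k π ≫ α) '' ω.obs X

/-- Very strong approximation (VSA) for the obstruction datum `(ω, S, k)`:
`X(k) = X(𝔸_{k,S})^ω` (where `X(k) ⊆ X(𝔸_{k,S})` diagonally). -/
def IsVSA (ω : GeneralizedObstruction k A) (π : A →ₐ[k] AS)
    (X : Over (Spec (CommRingCat.of k))) : Prop :=
  obsSet k ω π X =
    Set.range fun x : specOver k k ⟶ X => resOver k (Algebra.ofId k AS) ≫ x


namespace AlgebraicGeometry.Scheme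

variable {X Y : Scheme} (f : X ⟶ Y)

instance isIso_residueFieldMap_of_isPreimmersion [IsPreimmersion f] (x : X) :
    IsIso (f.residueFieldMap x) := by
  rw [ConcreteCategory.isIso_iff_bijective]
  refine ⟨RingHom.injective _, ?_⟩
  have hsurj : Function.Surjective (Y.residue (f x) ≫ f.residueFieldMap x) := by
    rw [residue_residueFieldMap]
    exact (X.residue_surjective x).comp (f.stalkMap_surjective x)
  exact .of_comp (f := ⇑(f.residueFieldMap x).hom) (g := ⇑(Y.residue (f x)).hom) hsurj

lemma exists_comp_eq_of_isPreimmersion [IsPreimmersion f] {K : Type} [Field K]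
    (g : Spec (.of K) ⟶ Y) (hg : g (IsLocalRing.closedPoint K) ∈ Set.range f) :
    ∃ y : Spec (.of K) ⟶ X, y ≫ f = g := by
  obtain ⟨x, hx⟩ := hg
  let κ : X.residueField x ⟶ .of K := inv (f.residueFieldMap x) ≫
    (Y.residueFieldCongr hx).hom ≫ Y.descResidueField (stalkClosedPointTo g)
  refine ⟨Spec.map κ ≫ X.fromSpecResidueField x, ?_⟩
  rw [Category.assoc, ← Hom.SpecMap_residueFieldMap_fromSpecResidueField, ← Category.assoc,
    ← Spec.map_comp, IsIso.hom_inv_id_assoc, Spec.map_comp, Category.assoc, residueFieldCongr_fromSpecResidueField]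
  exact descResidueField_stalkClosedPointTo_fromSpecResidueField K Y g

end AlgebraicGeometry.Scheme

lemma resOver_comp {R S T : Type} [CommRing R] [Algebra k R] [CommRing S] [Algebra k S]
    [CommRing T] [Algebra k T] (φ : R →ₐ[k] S) (ψ : S →ₐ[k] T) :
    resOver k ψ ≫ resOver k φ = resOver k (ψ.comp φ) := by
  ext1
  exact (Spec.map_comp _ _).symm

lemma resOver_ofId_comp (φ : A →ₐ[k] AS) :
    resOver k φ ≫ resOver k (Algebra.ofId k A) = resOver k (Algebra.ofId k AS) := by
  rw [resOver_comp, Subsingleton.elim (φ.comp _) (Algebra.ofId k AS)]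

lemma range_subset_obsSet (ω : GeneralizedObstruction k A) (π : A →ₐ[k] AS)
    (X : Over (Spec (CommRingCat.of k))) :
    (Set.range fun x : specOver k k ⟶ X => resOver k (Algebra.ofId k AS) ≫ x) ⊆
      obsSet k ω π X := by
  rintro _ ⟨x, rfl⟩
  exact ⟨_, ω.contains_rat X x, by dsimp only; rw [← Category.assoc, resOver_ofId_comp]⟩

lemma comp_mem_obsSet (ω : GeneralizedObstruction k A) (π : A →ₐ[k] AS)
    {X Y : Over (Spec (CommRingCat.of k))} (f : X ⟶ Y) {α : specOver k AS ⟶ X}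
    (hα : α ∈ obsSet k ω π X) : α ≫ f ∈ obsSet k ω π Y := by
  obtain ⟨β, hβ, rfl⟩ := hα
  exact ⟨β ≫ f, ω.functorial f hβ, (Category.assoc _ _ _).symm⟩

/-- The rational point of `W` is found through the `F`-point, where residue fields can be
compared; it lifts `α` because the immersion `f` is a monomorphism. -/
lemma mem_range_of_comp_eq_resOver {F : Type} [Field F] [Algebra k F] (ev : AS →ₐ[k] F)
    {X W : Over (Spec (CommRingCat.of k))} (f : W ⟶ X) [IsImmersion f.left]
    {α : specOver k AS ⟶ W} {x : specOver k k ⟶ X}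
    (hx : α ≫ f = resOver k (Algebra.ofId k AS) ≫ x) :
    α ∈ Set.range fun y : specOver k k ⟶ W => resOver k (Algebra.ofId k AS) ≫ y := by
  have hpt : x.left (IsLocalRing.closedPoint k) ∈ Set.range f.left := by
    have hF := congr_arg (fun g => (resOver k ev ≫ g).left (IsLocalRing.closedPoint F)) hx
    simp only [Over.comp_left] at hF
    exact ⟨_, hF.trans (congr_arg x.left (Subsingleton.elim (α := Spec (.of k)) _ _))⟩
  obtain ⟨y, hy⟩ : ∃ y : (specOver k k).left ⟶ W.left, y ≫ f.left = x.left :=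
    Scheme.exists_comp_eq_of_isPreimmersion f.left x.left hpt
  obtain ⟨ŷ, hŷ⟩ : ∃ ŷ : specOver k k ⟶ W, ŷ ≫ f = x :=
    ⟨Over.homMk y (by rw [← Over.w f, ← Category.assoc, hy, Over.w x]), by ext1; exact hy⟩
  refine ⟨ŷ, ?_⟩
  have : Mono f := Over.mono_of_mono_left f
  rw [← cancel_mono f, Category.assoc, hŷ, hx]

/-- The datum `ev : AS →ₐ[k] F` stands for the projection `𝔸_{k,S} → k_v` at a place `v ∈ S`. -/
theorem stmt11 (ω : GeneralizedObstruction k A) (π : A →ₐ[k] AS)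
    (F : Type) [Field F] [Algebra k F] (ev : AS →ₐ[k] F)
    (X W : Over (Spec (CommRingCat.of k))) (f : W ⟶ X) [IsImmersion f.left]
    (hX : IsVSA k ω π X) :
    IsVSA k ω π W := by
  refine (range_subset_obsSet k ω π W).antisymm' fun α hα => ?_
  obtain ⟨x, hx⟩ : α ≫ f ∈ Set.range fun x : specOver k k ⟶ X =>
      resOver k (Algebra.ofId k AS) ≫ x := hX ▸ comp_mem_obsSet k ω π f hα
  exact mem_range_of_comp_eq_resOver k ev f hx.symm
end
end

section
/- Let k be a field, X a variety over k, G a finite smooth k-group scheme, D ⊆ X a closed subvariety with D(k) = ∅, and π : Y → X a G-quasi-torsor over X unramified outside D (i.e., π is surjective quasi-finite, and its restriction over X ∖ D is a G-torsor). Then X(k) = ⋃_{σ ∈ H^1(k,G)} π^σ(Y^σ(k)), where Y^σ denotes the twist of Y by the cocycle σ. -/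
/-- Let `k` be a field with absolute Galois group `Γ = Gal(k_s/k)`, `X` a
variety over `k`, `G` a finite smooth `k`-group (encoded, by Galois descent, as the finite
group `G(k_s)` together with its `Γ`-action), `D ⊆ X` a closed subvariety with `D(k) = ∅`,
and `π : Y → X` a `G`-quasi-torsor over `X` unramified outside `D`: `π` is surjective and
quasi-finite (finite fibres), `G` acts on `Y` (on the right, via `r`) respecting `π`, and over
`X ∖ D` the action is simply transitive on fibres (a `G`-torsor).  Everything is encoded on
`k_s`-points with their Galois actions, rational points being the Galois-fixed points.
Then `X(k) = ⋃_{σ ∈ H¹(k,G)} π^σ(Y^σ(k))`, where for a 1-cocycle `σ : Γ → G` the `k`-points of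
the twist `Y^σ` are `Y^σ(k) = {y ∈ Y(k_s) : γ•y = y·σ(γ) for all γ}` and `π^σ` is induced
by `π`. -/
theorem stmt15 (Γ : Type) [Group Γ]
    (G : Type) [Group G] [Finite G] [MulDistribMulAction Γ G]
    (XX : Type) [MulAction Γ XX]
    (DD : Set XX) (hDstable : ∀ γ : Γ, ∀ x ∈ DD, γ • x ∈ DD)
    (hD : ∀ x ∈ DD, ∃ γ : Γ, γ • x ≠ x)
    (YY : Type) [MulAction Γ YY]
    (r : YY → G → YY)
    (hr1 : ∀ y, r y 1 = y) (hrmul : ∀ y g h, r (r y g) h = r y (g * h))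
    (π : YY → XX) (hsurj : Function.Surjective π)
    (hqf : ∀ x : XX, (π ⁻¹' {x}).Finite)
    (hπG : ∀ y g, π (r y g) = π y)
    (hπΓ : ∀ (γ : Γ) (y : YY), π (γ • y) = γ • π y)
    (hcompat : ∀ (γ : Γ) (y : YY) (g : G), γ • r y g = r (γ • y) (γ • g))
    (htorsor : ∀ x ∉ DD, ∀ y y' : YY, π y = x → π y' = x → ∃! g : G, r y g = y') :
    {x : XX | ∀ γ : Γ, γ • x = x} =
      ⋃ σ ∈ {σ : Γ → G | ∀ γ δ : Γ, σ (γ * δ) = σ γ * γ • σ δ},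
        π '' {y : YY | ∀ γ : Γ, γ • y = r y (σ γ)} := by
  ext x
  simp only [Set.mem_setOf_eq, Set.mem_iUnion, Set.mem_image]
  constructor
  · intro hx
    have hxD : x ∉ DD := fun h => (hD x h).elim (fun γ hγ => hγ (hx γ))
    obtain ⟨y, hy⟩ := hsurj x
    have hfib : ∀ γ : Γ, π (γ • y) = x := fun γ => by rw [hπΓ, hy, hx]
    have hex : ∀ γ : Γ, ∃! g : G, r y g = γ • y :=
      fun γ => htorsor x hxD y (γ • y) hy (hfib γ)
    choose σ hσ hσu using hex
    refine ⟨σ, ?_, y, fun γ => (hσ γ).symm, hy⟩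
    intro γ δ
    refine (hσu (γ * δ) _ ?_).symm
    show r y (σ γ * γ • σ δ) = (γ * δ) • y
    calc r y (σ γ * γ • σ δ) = r (r y (σ γ)) (γ • σ δ) := (hrmul _ _ _).symm
      _ = r (γ • y) (γ • σ δ) := by rw [hσ γ]
      _ = γ • r y (σ δ) := (hcompat γ y (σ δ)).symm
      _ = γ • (δ • y) := by rw [hσ δ]
      _ = (γ * δ) • y := (mul_smul γ δ y).symm
  · rintro ⟨σ, hσ, y, hy, rfl⟩
    intro γ
    rw [← hπΓ, hy γ, hπG]
end
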